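/- If X is a d-dimensional shift of finite type having only finitely many subsystems, then every subsystem of X is an isolated point of the space S^d. -/
import Mathlib


/-- The group `ℤ^d`. -/
abbrev ZD (d : ℕ) := Fin d → ℤ

/-- A configuration is a map `ℤ^d → ℤ`. -/
abbrev Config (d : ℕ) := ZD d → ℤ

/-- The shift map `σ^u`, defined by `σ^u(x)_v = x_{u+v}`. -/
def shiftMap {d : ℕ} (u : ZD d) (x : Config d) : Config d := fun v => x (u + v)

/-- The sup norm `‖·‖_∞` on `ℤ^d`, valued in `ℕ`. -/
def normInf {d : ℕ} (n : ZD d) : ℕ := Finset.univ.sup fun i => (n i).natAbs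

open Classical in
/-- The metric `δ` on configurations: `δ(x,y) = 2^{-min{‖n‖_∞ : x_n ≠ y_n}}`, `δ(x,x) = 0`. -/
noncomputable def deltaDist {d : ℕ} (x y : Config d) : ℝ :=
  if x = y then 0
  else (2 : ℝ) ^ (-((sInf {m : ℕ | ∃ n : ZD d, normInf n = m ∧ x n ≠ y n} : ℕ) : ℤ))

/-- The closure of a set of configurations with respect to the metric `δ`. -/
def deltaClosure {d : ℕ} (A : Set (Config d)) : Set (Config d) :=
  {x | ∀ ε : ℝ, 0 < ε → ∃ a ∈ A, deltaDist x a < ε}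

/-- A set of configurations is closed for `δ` when it contains all its limit points. -/
def IsDeltaClosed {d : ℕ} (A : Set (Config d)) : Prop := deltaClosure A ⊆ A

/-- A `d`-dimensional shift: a nonempty set of configurations over a common finite
alphabet, closed for `δ` and invariant under every shift map. -/
def IsShift {d : ℕ} (X : Set (Config d)) : Prop :=
  X.Nonempty ∧ (∃ A : Finset ℤ, ∀ x ∈ X, ∀ v : ZD d, x v ∈ A) ∧ IsDeltaClosed X ∧
    ∀ u : ZD d, ∀ x ∈ X, shiftMap u x ∈ X

/-- The Hausdorff metric `δ_H` on the space of shifts. -/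
noncomputable def deltaH {d : ℕ} (X Z : Set (Config d)) : ℝ :=
  max (⨆ x : X, ⨅ z : Z, deltaDist (x : Config d) (z : Config d))
      (⨆ z : Z, ⨅ x : X, deltaDist (x : Config d) (z : Config d))

/-- A subsystem of a shift `X`: a nonempty closed shift-invariant subset of `X`. -/
def IsSubsystem {d : ℕ} (Z X : Set (Config d)) : Prop :=
  Z.Nonempty ∧ Z ⊆ X ∧ IsDeltaClosed Z ∧ ∀ u : ZD d, ∀ z ∈ Z, shiftMap u z ∈ Z

/-- A maximal subsystem of `X`: a proper subsystem such that any subsystem strictly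
between it and `X` equals `X`. -/
def IsMaximalSubsystem {d : ℕ} (Z X : Set (Config d)) : Prop :=
  IsSubsystem Z X ∧ Z ≠ X ∧ ∀ Z', IsSubsystem Z' X → Z ⊂ Z' → Z' = X

/-- An outcast of `X`: a proper subsystem contained in no maximal subsystem of `X`. -/
def IsOutcast {d : ℕ} (Z X : Set (Config d)) : Prop :=
  IsSubsystem Z X ∧ Z ≠ X ∧ ∀ M, IsMaximalSubsystem M X → ¬ Z ⊆ M

/-- A pattern with finite support `U` (given by the values of `p` on `U`) appears in the
configuration `x`. -/
def PatternAppears {d : ℕ} (U : Finset (ZD d)) (p : ZD d → ℤ) (x : Config d) : Prop :=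
  ∃ u : ZD d, ∀ v ∈ U, x (u + v) = p v

/-- The set of configurations over the alphabet `A` avoiding every pattern in `F`. -/
def XofF {d : ℕ} (A : Finset ℤ) (F : Set (Finset (ZD d) × (ZD d → ℤ))) : Set (Config d) :=
  {x | (∀ v : ZD d, x v ∈ A) ∧ ∀ q ∈ F, ¬ PatternAppears q.1 q.2 x}

/-- A shift of finite type: defined by a finite alphabet and a finite set of forbidden
patterns. -/
def IsSFT {d : ℕ} (X : Set (Config d)) : Prop :=
  ∃ (A : Finset ℤ) (F : Finset (Finset (ZD d) × (ZD d → ℤ))), X = XofF A (F : Set _)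

/-- `X` is an isolated point of the subspace `S` (with the Hausdorff metric `δ_H`). -/
def IsolatedIn {d : ℕ} (S : Set (Set (Config d))) (X : Set (Config d)) : Prop :=
  X ∈ S ∧ ∃ ε : ℝ, 0 < ε ∧ ∀ Z ∈ S, deltaH X Z < ε → Z = X

/-- The orbit of a configuration under the shift action. -/
def orbit {d : ℕ} (x : Config d) : Set (Config d) := {y | ∃ u : ZD d, y = shiftMap u x}

/-- A shift is transitive when some point has dense orbit. -/
def IsTransitive {d : ℕ} (X : Set (Config d)) : Prop :=
  IsShift X ∧ ∃ x ∈ X, X ⊆ deltaClosure (orbit x)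

/-- A shift is minimal when its only subsystem is itself. -/
def IsMinimalShift {d : ℕ} (X : Set (Config d)) : Prop :=
  IsShift X ∧ ∀ Z, IsSubsystem Z X → Z = X

section Aux
variable {d : ℕ}

lemma deltaDist_nonneg (x y : Config d) : 0 ≤ deltaDist x y := by
  unfold deltaDist
  split
  · exact le_refl 0
  · positivity

lemma deltaDist_le_one (x y : Config d) : deltaDist x y ≤ 1 := by
  unfold deltaDist
  split
  · norm_num
  · calc (2:ℝ) ^ (-((sInf {m : ℕ | ∃ n : ZD d, normInf n = m ∧ x n ≠ y n} : ℕ) : ℤ))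
        ≤ (2:ℝ) ^ (0:ℤ) := zpow_le_zpow_right₀ one_le_two (by omega)
      _ = 1 := zpow_zero 2

lemma deltaDist_symm (x y : Config d) : deltaDist x y = deltaDist y x := by
  unfold deltaDist
  have hs : {m : ℕ | ∃ n : ZD d, normInf n = m ∧ x n ≠ y n}
      = {m : ℕ | ∃ n : ZD d, normInf n = m ∧ y n ≠ x n} := by
    ext m
    constructor <;> rintro ⟨n, h1, h2⟩ <;> exact ⟨n, h1, h2.symm⟩
  by_cases h : x = y
  · simp [h]
  · rw [if_neg h, if_neg (fun hyx => h hyx.symm), hs]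

lemma deltaDist_lt_agree {x y : Config d} {N : ℕ}
    (h : deltaDist x y < (2:ℝ) ^ (-(N:ℤ))) :
    ∀ n : ZD d, normInf n ≤ N → x n = y n := by
  intro n hn
  by_cases hxy : x = y
  · rw [hxy]
  by_contra hne
  rw [deltaDist, if_neg hxy] at h
  set S := {m : ℕ | ∃ n : ZD d, normInf n = m ∧ x n ≠ y n} with hS
  have hmem : normInf n ∈ S := ⟨n, rfl, hne⟩
  have hle : sInf S ≤ normInf n := Nat.sInf_le hmem
  set M : ℕ := sInf S with hM
  have hlt : N < M := by
    by_contra hcon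
    push_neg at hcon
    have h2 : -(N:ℤ) ≤ -(M:ℤ) := by omega
    have h3 := zpow_le_zpow_right₀ (one_le_two : (1:ℝ) ≤ 2) h2
    linarith
  omega

lemma deltaH_extract {Z Y : Set (Config d)} (hZne : Z.Nonempty) (hYne : Y.Nonempty)
    {ε : ℝ} (h : deltaH Z Y < ε) :
    (∀ z ∈ Z, ∃ y ∈ Y, deltaDist z y < ε) ∧ (∀ y ∈ Y, ∃ z ∈ Z, deltaDist z y < ε) := by
  have hZn : Nonempty Z := hZne.to_subtype
  have hYn : Nonempty Y := hYne.to_subtype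
  rw [deltaH, max_lt_iff] at h
  obtain ⟨h1, h2⟩ := h
  constructor
  · intro z hz
    have hb : BddAbove (Set.range fun x : Z => ⨅ y : Y, deltaDist (x : Config d) y) := by
      refine ⟨1, ?_⟩
      rintro _ ⟨x, rfl⟩
      exact ciInf_le_of_le ⟨0, by rintro _ ⟨y, rfl⟩; exact deltaDist_nonneg _ _⟩
        (Classical.arbitrary Y) (deltaDist_le_one _ _)
    have hlt : (⨅ y : Y, deltaDist (z : Config d) y) < ε :=
      lt_of_le_of_lt (le_ciSup hb ⟨z, hz⟩) h1
    obtain ⟨y, hy⟩ := exists_lt_of_ciInf_lt hlt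
    exact ⟨y, y.2, hy⟩
  · intro y hy
    have hb : BddAbove (Set.range fun y : Y => ⨅ x : Z, deltaDist (x : Config d) y) := by
      refine ⟨1, ?_⟩
      rintro _ ⟨y', rfl⟩
      exact ciInf_le_of_le ⟨0, by rintro _ ⟨x, rfl⟩; exact deltaDist_nonneg _ _⟩
        (Classical.arbitrary Z) (deltaDist_le_one _ _)
    have hlt : (⨅ x : Z, deltaDist (x : Config d) y) < ε :=
      lt_of_le_of_lt (le_ciSup hb ⟨y, hy⟩) h2
    obtain ⟨x, hx⟩ := exists_lt_of_ciInf_lt hlt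
    exact ⟨x, x.2, hx⟩

lemma deltaH_pos {Z W : Set (Config d)} (hZne : Z.Nonempty) (hWne : W.Nonempty)
    (hZcl : IsDeltaClosed Z) (hWcl : IsDeltaClosed W) (hne : Z ≠ W) :
    0 < deltaH Z W := by
  by_contra h
  push_neg at h
  apply hne
  have hext : ∀ ε : ℝ, 0 < ε →
      (∀ z ∈ Z, ∃ w ∈ W, deltaDist z w < ε) ∧ (∀ w ∈ W, ∃ z ∈ Z, deltaDist z w < ε) :=
    fun ε hε => deltaH_extract hZne hWne (lt_of_le_of_lt h hε)
  apply Set.Subset.antisymm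
  · intro z hz
    exact hWcl (fun ε hε => (hext ε hε).1 z hz)
  · intro w hw
    apply hZcl
    intro ε hε
    obtain ⟨z, hz, hd⟩ := (hext ε hε).2 w hw
    exact ⟨z, hz, by rwa [deltaDist_symm]⟩

lemma normInf_zero : normInf (0 : ZD d) = 0 := by
  simp [normInf]

lemma near_subset {X Z Y : Set (Config d)} {A : Finset ℤ}
    {F : Finset (Finset (ZD d) × (ZD d → ℤ))}
    (hXF : X = XofF A (F : Set _)) (hZX : Z ⊆ X) (hZne : Z.Nonempty)
    (hYne : Y.Nonempty) (hYinv : ∀ u : ZD d, ∀ x ∈ Y, shiftMap u x ∈ Y)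
    (h : deltaH Z Y < (2:ℝ) ^ (-((F.sup fun q => q.1.sup normInf : ℕ) : ℤ))) :
    Y ⊆ X := by
  set N : ℕ := F.sup fun q => q.1.sup normInf with hN
  have hext := (deltaH_extract hZne hYne h).2
  intro y hy
  rw [hXF]
  constructor
  · intro v
    obtain ⟨z, hz, hd⟩ := hext (shiftMap v y) (hYinv v y hy)
    have hag := deltaDist_lt_agree hd 0 (by rw [normInf_zero]; omega)
    have hyz : y v = z 0 := by rw [hag]; simp [shiftMap]
    rw [hyz]
    have hzX : z ∈ XofF A (F : Set _) := by rw [← hXF]; exact hZX hz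
    exact hzX.1 0
  · rintro q hq ⟨u, hu⟩
    obtain ⟨z, hz, hd⟩ := hext (shiftMap u y) (hYinv u y hy)
    have hzX : z ∈ XofF A (F : Set _) := by rw [← hXF]; exact hZX hz
    refine hzX.2 q hq ⟨0, fun v hv => ?_⟩
    have hvN : normInf v ≤ N :=
      le_trans (Finset.le_sup hv) (Finset.le_sup (f := fun q => q.1.sup normInf) hq)
    have hag := deltaDist_lt_agree hd v hvN
    rw [zero_add, hag]
    simpa [shiftMap] using hu v hv

end Aux

/-- If `X` is a `d`-dimensional shift of finite type having only finitely
many subsystems, then every subsystem of `X` is an isolated point of `S^d`. -/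
theorem subsystems_of_SFT_with_finitely_many_subsystems_isolated
    (d : ℕ) (hd : 1 ≤ d) (X : Set (Config d)) (hX : IsShift X) (hsft : IsSFT X)
    (hfin : {Z : Set (Config d) | IsSubsystem Z X}.Finite) :
    ∀ Z : Set (Config d), IsSubsystem Z X →
      IsolatedIn {Y : Set (Config d) | IsShift Y} Z := by
  classical
  intro Z hZ
  obtain ⟨hXne, ⟨A₀, hA₀⟩, hXcl, hXinv⟩ := hX
  obtain ⟨hZne, hZX, hZcl, hZinv⟩ := hZ
  obtain ⟨A, F, hXF⟩ := hsft
  set N : ℕ := F.sup fun q => q.1.sup normInf with hN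
  set ε₀ : ℝ := (2:ℝ) ^ (-(N:ℤ)) with hε₀
  have hε₀pos : 0 < ε₀ := by positivity
  have hZshift : IsShift Z :=
    ⟨hZne, ⟨A₀, fun z hz v => hA₀ z (hZX hz) v⟩, hZcl, hZinv⟩
  set G : Finset (Set (Config d)) := hfin.toFinset.filter (fun W => W ≠ Z) with hG
  set T : Finset ℝ := G.image (fun W => deltaH Z W) with hT
  have hTpos : ∀ r ∈ T, 0 < r := by
    intro r hr
    rw [hT, Finset.mem_image] at hr
    obtain ⟨W, hW, rfl⟩ := hr
    rw [hG, Finset.mem_filter, Set.Finite.mem_toFinset] at hW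
    obtain ⟨hWsub, hWne⟩ := hW
    exact deltaH_pos hZne hWsub.1 hZcl hWsub.2.2.1 (fun h => hWne h.symm)
  set ε : ℝ := if hne : T.Nonempty then min ε₀ (T.min' hne) else ε₀ with hε
  have hεpos : 0 < ε := by
    rw [hε]
    split
    · next hne => exact lt_min hε₀pos (hTpos _ (T.min'_mem hne))
    · exact hε₀pos
  have hεle : ε ≤ ε₀ := by
    rw [hε]; split
    · exact min_le_left _ _
    · exact le_refl _
  have hεT : ∀ r ∈ T, ε ≤ r := by
    intro r hr
    rw [hε]
    rw [dif_pos ⟨r, hr⟩]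
    exact le_trans (min_le_right _ _) (T.min'_le r hr)
  refine ⟨hZshift, ε, hεpos, ?_⟩
  intro Y hY hYlt
  obtain ⟨hYne, hYalph, hYcl, hYinv⟩ := hY
  have hYX : Y ⊆ X :=
    near_subset hXF hZX hZne hYne hYinv (lt_of_lt_of_le hYlt hεle)
  have hYsub : IsSubsystem Y X := ⟨hYne, hYX, hYcl, hYinv⟩
  by_contra hYZ
  have hmem : deltaH Z Y ∈ T := by
    rw [hT, Finset.mem_image]
    exact ⟨Y, by rw [hG, Finset.mem_filter, Set.Finite.mem_toFinset]; exact ⟨hYsub, hYZ⟩, rfl⟩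
  exact absurd hYlt (not_lt.2 (hεT _ hmem))
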